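/- Let h : ℝ^d → ℝ ∪ {∞} be proper closed convex, and for γ > 0 define P_γ(w, s) = (1/γ)(w − prox_{γh}(w − γs)). Then for any γ¹ ≥ γ² > 0 and any w, s ∈ ℝ^d: ‖P_{γ¹}(w, s)‖₂ ≤ ‖P_{γ²}(w, s)‖₂. -/
import Mathlib

open RealInnerProductSpace

lemma prox_subgradient_ineq {E : Type*} [NormedAddCommGroup E] [InnerProductSpace ℝ E]
    {γ : ℝ} (hγ : 0 < γ) (h : E → ℝ) (hconv : ConvexOn ℝ Set.univ h)
    (v p : E)
    (hp : ∀ x : E, (1 / (2 * γ)) * ‖v - p‖ ^ 2 + h p ≤ (1 / (2 * γ)) * ‖v - x‖ ^ 2 + h x)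
    (x : E) : ⟪v - p, x - p⟫ ≤ γ * (h x - h p) := by
  have hB : (0:ℝ) ≤ ‖x - p‖ ^ 2 := by positivity
  have key : ∀ t : ℝ, 0 < t → t ≤ 1 →
      ⟪v - p, x - p⟫ ≤ t * (‖x - p‖ ^ 2 / 2) + γ * (h x - h p) := by
    intro t ht ht1
    have hxineq := hp (p + t • (x - p))
    have hconvt : h (p + t • (x - p)) ≤ (1 - t) * h p + t * h x := by
      have hc := hconv.2 (Set.mem_univ p) (Set.mem_univ x) (by linarith : (0:ℝ) ≤ 1 - t)
        ht.le (by ring)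
      have he : (1 - t) • p + t • x = p + t • (x - p) := by
        rw [smul_sub]; module
      rw [he] at hc
      simpa [smul_eq_mul] using hc
    have hnorm : ‖v - (p + t • (x - p))‖ ^ 2
        = ‖v - p‖ ^ 2 - 2 * t * ⟪v - p, x - p⟫ + t ^ 2 * ‖x - p‖ ^ 2 := by
      have he : v - (p + t • (x - p)) = (v - p) - t • (x - p) := by abel
      rw [he, @norm_sub_sq_real, real_inner_smul_right, norm_smul, Real.norm_eq_abs,
        mul_pow, sq_abs]
      ring
    rw [hnorm] at hxineq
    have h2γ : (0:ℝ) < 2 * γ := by linarith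
    have hmul := mul_le_mul_of_nonneg_left hxineq h2γ.le
    have h0 : 2 * γ * h p ≤ -(2 * t * ⟪v - p, x - p⟫) + t ^ 2 * ‖x - p‖ ^ 2
        + 2 * γ * h (p + t • (x - p)) := by
      have e : 2 * γ * (1 / (2 * γ)) = 1 := by field_simp
      nlinarith [hmul]
    have hc2 : 2 * γ * (h (p + t • (x - p)) - h p) ≤ 2 * γ * (t * (h x - h p)) :=
      mul_le_mul_of_nonneg_left (by linarith) h2γ.le
    have hlin : 2 * t * ⟪v - p, x - p⟫ ≤ t ^ 2 * ‖x - p‖ ^ 2 + 2 * γ * (t * (h x - h p)) := by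
      linarith
    nlinarith [hlin, ht, mul_pos ht hγ]
  refine le_of_forall_pos_le_add ?_
  intro ε hε
  set B := ‖x - p‖ ^ 2 with hBdef
  set t : ℝ := min 1 (ε / (B / 2 + 1)) with htdef
  have hden : (0:ℝ) < B / 2 + 1 := by linarith
  have ht0 : 0 < t := lt_min one_pos (div_pos hε hden)
  have ht1 : t ≤ 1 := min_le_left _ _
  have ht2 : t ≤ ε / (B / 2 + 1) := min_le_right _ _
  have htB : t * (B / 2) ≤ ε := by
    have h1 : t * (B / 2) ≤ (ε / (B / 2 + 1)) * (B / 2) :=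
      mul_le_mul_of_nonneg_right ht2 (by linarith)
    have h2 : (ε / (B / 2 + 1)) * (B / 2) ≤ ε := by
      rw [div_mul_eq_mul_div, div_le_iff₀ hden]
      nlinarith
    linarith
  have := key t ht0 ht1
  linarith

set_option maxHeartbeats 1000000 in
/-- Monotonicity of the gradient mapping norm in the stepsize: for `γ¹ ≥ γ² > 0`,
`‖P_{γ¹}(w,s)‖ ≤ ‖P_{γ²}(w,s)‖`. -/
theorem gradient_mapping_norm_monotone (d : ℕ) (γ1 γ2 : ℝ) (hγ2 : 0 < γ2) (hγ : γ2 ≤ γ1)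
    (h : EuclideanSpace ℝ (Fin d) → ℝ)
    (hconv : ConvexOn ℝ Set.univ h) (hclosed : LowerSemicontinuous h)
    (w s p1 p2 : EuclideanSpace ℝ (Fin d))
    (hp1 : ∀ x : EuclideanSpace ℝ (Fin d),
      (1 / (2 * γ1)) * ‖w - γ1 • s - p1‖ ^ 2 + h p1 ≤ (1 / (2 * γ1)) * ‖w - γ1 • s - x‖ ^ 2 + h x)
    (hp2 : ∀ x : EuclideanSpace ℝ (Fin d),
      (1 / (2 * γ2)) * ‖w - γ2 • s - p2‖ ^ 2 + h p2 ≤ (1 / (2 * γ2)) * ‖w - γ2 • s - x‖ ^ 2 + h x) :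
    ‖(1 / γ1) • (w - p1)‖ ≤ ‖(1 / γ2) • (w - p2)‖ := by
  have hγ1 : 0 < γ1 := lt_of_lt_of_le hγ2 hγ
  have I1 := prox_subgradient_ineq hγ1 h hconv (w - γ1 • s) p1 hp1 p2
  have I2 := prox_subgradient_ineq hγ2 h hconv (w - γ2 • s) p2 hp2 p1
  obtain ⟨u, hu⟩ : ∃ u : EuclideanSpace ℝ (Fin d), u = w - p1 := ⟨_, rfl⟩
  obtain ⟨v, hv⟩ : ∃ v : EuclideanSpace ℝ (Fin d), v = w - p2 := ⟨_, rfl⟩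
  have e1 : w - γ1 • s - p1 = u - γ1 • s := by rw [hu]; exact sub_right_comm w (γ1 • s) p1
  have e2 : w - γ2 • s - p2 = v - γ2 • s := by rw [hv]; exact sub_right_comm w (γ2 • s) p2
  have e3 : p2 - p1 = u - v := by rw [hu, hv]; abel
  have e4 : p1 - p2 = v - u := by rw [hu, hv]; abel
  rw [e1, e3] at I1
  rw [e2, e4] at I2
  have f1 : ⟪u - γ1 • s, u - v⟫ = ‖u‖ ^ 2 - ⟪u, v⟫ - γ1 * ⟪s, u⟫ + γ1 * ⟪s, v⟫ := by
    simp only [inner_sub_left, inner_sub_right, real_inner_smul_left,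
      real_inner_self_eq_norm_sq]
    ring
  have f2 : ⟪v - γ2 • s, v - u⟫ = ‖v‖ ^ 2 - ⟪u, v⟫ - γ2 * ⟪s, v⟫ + γ2 * ⟪s, u⟫ := by
    simp only [inner_sub_left, inner_sub_right, real_inner_smul_left,
      real_inner_self_eq_norm_sq, real_inner_comm v u]
    ring
  rw [f1] at I1
  rw [f2] at I2
  have hinn : ⟪u, v⟫ ≤ ‖u‖ * ‖v‖ := real_inner_le_norm u v
  have hA1 : (0:ℝ) ≤ ‖u‖ := norm_nonneg u
  have hA2 : (0:ℝ) ≤ ‖v‖ := norm_nonneg v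
  have hkey : γ2 * ‖u‖ ^ 2 + γ1 * ‖v‖ ^ 2 ≤ (γ1 + γ2) * ⟪u, v⟫ := by
    nlinarith [mul_le_mul_of_nonneg_left I1 hγ2.le, mul_le_mul_of_nonneg_left I2 hγ1.le]
  have hmain : γ2 * ‖u‖ ≤ γ1 * ‖v‖ := by
    by_contra hcon
    push_neg at hcon
    have h5 : γ2 * ‖u‖ ^ 2 + γ1 * ‖v‖ ^ 2 ≤ (γ1 + γ2) * (‖u‖ * ‖v‖) := by
      nlinarith
    have hb : γ2 * ‖v‖ ≤ γ1 * ‖v‖ := mul_le_mul_of_nonneg_right hγ hA2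
    have hab : ‖v‖ < ‖u‖ := lt_of_mul_lt_mul_left (by linarith) hγ2.le
    have hprod : 0 < (‖u‖ - ‖v‖) * (γ2 * ‖u‖ - γ1 * ‖v‖) :=
      mul_pos (sub_pos.2 hab) (by linarith)
    have hexp : (‖u‖ - ‖v‖) * (γ2 * ‖u‖ - γ1 * ‖v‖)
        = γ2 * ‖u‖ ^ 2 + γ1 * ‖v‖ ^ 2 - (γ1 + γ2) * (‖u‖ * ‖v‖) := by ring
    linarith [h5, hprod, hexp.le, hexp.ge]
  rw [← hu, ← hv, norm_smul, norm_smul, Real.norm_eq_abs, Real.norm_eq_abs,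
    abs_of_pos (by positivity : (0:ℝ) < 1 / γ1), abs_of_pos (by positivity : (0:ℝ) < 1 / γ2),
    div_mul_eq_mul_div, div_mul_eq_mul_div, one_mul, one_mul, div_le_div_iff₀ hγ1 hγ2]
  linarith [hmain]
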